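/- arXiv:1712.00586 — 2 statements merged into one kernel-verified Lean document; each statement's English description precedes it below -/
import Mathlib

section
/- Let S be a primitive constant-length substitution of length L > 1, ν a fully supported product measure on S^ℕ with invariant state μ_ν, and μ the product measure with the same one-site marginals as μ_ν. If ρ(μ, μ_ν) < ∞, then ρ(𝕊_ν^{∘ℓ} μ, μ_ν) → 0 as ℓ → ∞; more precisely there is a function N(ℓ) → ∞ with ρ(𝕊_ν^{∘ℓ} μ, μ_ν) ≤ ρ(μ, μ_ν)(1/N(ℓ) + 1/L^ℓ). -/
open MeasureTheory Filter
open scoped ENNReal Classical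

def applySub {A S : Type*} (subst : S → A → List A) {N : ℕ}
    (s : Fin N → S) (b : Fin N → A) : List A :=
  (List.ofFn fun i => subst (s i) (b i)).flatten

def trunc {A : Type*} [Inhabited A] (N : ℕ) (w : List A) : Fin N → A :=
  fun i => w.getD i.1 default

def chainT {A S : Type*} [Inhabited A] (subst : S → A → List A) {N : ℕ} :
    List (Fin N → S) → (Fin N → A) → (Fin N → A)
  | [], b => b
  | s :: rest, b => chainT subst rest (trunc N (applySub subst s b))

def PrimitiveSub {A S : Type*} [Inhabited A] (subst : S → A → List A) : Prop :=
  ∀ N : ℕ, ∃ nN : ℕ, ∀ n ≥ nN, ∀ a b : Fin N → A,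
    ∃ ss : List (Fin N → S), ss.length = n ∧ chainT subst ss b = a

def cyl (A : Type*) {N : ℕ} (a : Fin N → A) : Set (ℕ → A) :=
  {x | ∀ i : Fin N, x i.1 = a i}

/-- The projective distance. -/
noncomputable def projDist {A : Type*} [MeasurableSpace A]
    (μ μ' : Measure (ℕ → A)) : ℝ≥0∞ :=
  ⨆ (N : ℕ) (a : Fin (N + 1) → A),
    ENNReal.ofReal (|Real.log ((μ (cyl A a)).toReal / (μ' (cyl A a)).toReal)| / (N + 1))

/-- The transition matrix M_N(a,b) = ∑_{s(b) ⊒ a} ν[s] for the product measure on S^ℕ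
with one-site marginals p. -/
noncomputable def MNp {A S : Type*} [Fintype A] [DecidableEq A] [Fintype S]
    (subst : S → A → List A) (p : ℕ → S → ℝ) (N : ℕ) :
    Matrix (Fin N → A) (Fin N → A) ℝ :=
  Matrix.of fun a b => ∑ s : Fin N → S,
    if List.ofFn a <+: applySub subst s b then ∏ i : Fin N, p i.1 (s i) else 0

/-- The projective distance between the iterate 𝕊_ν^ℓ μ (whose N-marginal is
(M_N)^ℓ applied to the N-marginal of μ) and the invariant state μ_ν. -/
noncomputable def iterDist {A S : Type*} [Fintype A] [DecidableEq A] [Fintype S]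
    [MeasurableSpace A] (subst : S → A → List A) (p : ℕ → S → ℝ)
    (μ μν : Measure (ℕ → A)) (ℓ : ℕ) : ℝ≥0∞ :=
  ⨆ (N : ℕ) (a : Fin (N + 1) → A),
    ENNReal.ofReal
      (|Real.log (((MNp subst p (N + 1)) ^ ℓ).mulVec
          (fun b => (μ (cyl A b)).toReal) a / (μν (cyl A a)).toReal)| / (N + 1))
/-!
The `n`-letter marginal of `𝕊_ν^ℓ μ` is `(M_n)^ℓ` applied to that of `μ`. Each letter of `s(b)`
comes from a single letter of `b`, so `(M_n)^ℓ (a, b)` only depends on the first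
`m = ⌈n / L^ℓ⌉` letters of `b`. As `μ_ν` is a fixed point, `(𝕊_ν^ℓ μ)[a]` and `μ_ν[a]` are then
the same nonnegative combination of the weights `μ[b']`, resp. `μ_ν[b']`, of words of length `m`,
so their log-ratio is at most `m ρ(μ, μ_ν)`; it even vanishes when `m = 1`, because `μ` and `μ_ν`
have the same one-site marginals. Dividing by `n` gives `ρ(𝕊_ν^ℓ μ, μ_ν) ≤ 2 ρ(μ, μ_ν) / L^ℓ`.
-/

open Real Matrix

lemma List.getD_flatten_of_forall_length_eq {α : Type*} {L : ℕ} (hL : 0 < L) (d : α) :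
    ∀ ws : List (List α), (∀ w ∈ ws, w.length = L) → ∀ j : ℕ,
      ws.flatten.getD j d = (ws.getD (j / L) []).getD (j % L) d
  | [], _, j => by simp
  | w :: ws, hws, j => by
      have hw : w.length = L := hws w List.mem_cons_self
      rw [List.flatten_cons]
      rcases lt_or_ge j L with hj | hj
      · rw [List.getD_append _ _ _ _ (hw ▸ hj), Nat.div_eq_of_lt hj, Nat.mod_eq_of_lt hj,
          List.getD_cons_zero]
      · rw [List.getD_append_right _ _ _ _ (hw ▸ hj), hw, Nat.div_eq_sub_div hL hj,
          Nat.mod_eq_sub_mod hj, List.getD_cons_succ,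
          getD_flatten_of_forall_length_eq hL d ws (fun v hv => hws v (List.mem_cons_of_mem _ hv))]

section Words

variable {A S : Type*} {L : ℕ} (subst : S → A → List A)

lemma applySub_length (hlen : ∀ σ a, (subst σ a).length = L) {n : ℕ} (s : Fin n → S)
    (b : Fin n → A) : (applySub subst s b).length = n * L := by
  simp [applySub, List.length_flatten, List.sum_ofFn, hlen]

lemma applySub_getD (hL : 0 < L) (hlen : ∀ σ a, (subst σ a).length = L) {n : ℕ}
    (s : Fin n → S) (b : Fin n → A) (j : ℕ) (hj : j / L < n) (d : A) :
    (applySub subst s b).getD j d = (subst (s ⟨j / L, hj⟩) (b ⟨j / L, hj⟩)).getD (j % L) d := by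
  have hj' : j / L < (List.ofFn fun i => subst (s i) (b i)).length := by simpa using hj
  rw [applySub, List.getD_flatten_of_forall_length_eq hL _ _
    (by simp only [List.mem_ofFn, forall_exists_index]; rintro _ i rfl; exact hlen _ _),
    List.getD_eq_getElem _ _ hj', List.getElem_ofFn]

lemma ofFn_prefix_iff_eq_trunc [Inhabited A] {n : ℕ} {w : List A} (hw : n ≤ w.length)
    (c : Fin n → A) : List.ofFn c <+: w ↔ c = trunc n w := by
  have htake : List.ofFn (trunc n w) = w.take n := by
    refine List.ext_getElem (by simp [hw]) fun i h _ => ?_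
    have hi : i < w.length := (List.length_ofFn ▸ h).trans_le hw
    simp [trunc, List.getElem?_eq_getElem hi]
  rw [List.prefix_iff_eq_take, List.length_ofFn, ← htake, List.ofFn_inj]

end Words

def padWord {A : Type*} [Inhabited A] (n : ℕ) {m : ℕ} (b : Fin m → A) : Fin n → A :=
  fun i => if h : (i : ℕ) < m then b ⟨i, h⟩ else default

section Transition

variable {A S : Type*} [Fintype A] [DecidableEq A] [Fintype S] {L : ℕ}
  (subst : S → A → List A) (p : ℕ → S → ℝ)

lemma MNp_pow_nonneg (hp : ∀ k σ, 0 ≤ p k σ) {n : ℕ} :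
    ∀ (ℓ : ℕ) (a b : Fin n → A), 0 ≤ (MNp subst p n ^ ℓ) a b
  | 0, a, b => by
      rw [pow_zero, Matrix.one_apply]
      split <;> norm_num
  | ℓ + 1, a, b => by
      rw [pow_succ, Matrix.mul_apply]
      refine Finset.sum_nonneg fun c _ => mul_nonneg (MNp_pow_nonneg hp ℓ a c) ?_
      exact Finset.sum_nonneg fun s _ => by
        split
        · exact Finset.prod_nonneg fun i _ => hp _ _
        · exact le_rfl

lemma MNp_pow_succ_apply [Inhabited A] (hL : 0 < L) (hlen : ∀ σ a, (subst σ a).length = L)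
    {n : ℕ} (ℓ : ℕ) (a b : Fin n → A) :
    (MNp subst p n ^ (ℓ + 1)) a b = ∑ s : Fin n → S,
      (∏ i : Fin n, p i.1 (s i)) * (MNp subst p n ^ ℓ) a (trunc n (applySub subst s b)) := by
  have hn : ∀ s, n ≤ (applySub subst s b).length := fun s => by
    rw [applySub_length subst hlen]; exact Nat.le_mul_of_pos_right n hL
  have hM : ∀ c, MNp subst p n c b =
      ∑ s : Fin n → S, if c = trunc n (applySub subst s b) then ∏ i : Fin n, p i.1 (s i) else 0 :=
    fun c => by simp only [MNp, Matrix.of_apply, ofFn_prefix_iff_eq_trunc (hn _)]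
  simp only [pow_succ, Matrix.mul_apply, hM, Finset.mul_sum, mul_ite, mul_zero]
  rw [Finset.sum_comm]
  refine Finset.sum_congr rfl fun s _ => ?_
  rw [Finset.sum_ite_eq' Finset.univ, if_pos (Finset.mem_univ _), mul_comm]

lemma MNp_pow_apply_congr [Inhabited A] (hL : 0 < L) (hlen : ∀ σ a, (subst σ a).length = L)
    {n : ℕ} (ℓ : ℕ) {m : ℕ} (hcover : n ≤ L ^ ℓ * m) (a : Fin n → A) {b b' : Fin n → A}
    (hbb' : ∀ i : Fin n, (i : ℕ) < m → b i = b' i) :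
    (MNp subst p n ^ ℓ) a b = (MNp subst p n ^ ℓ) a b' := by
  induction ℓ generalizing m b b' with
  | zero =>
    rw [funext fun i => hbb' i (i.isLt.trans_le (by simpa using hcover))]
  | succ ℓ ih =>
    rw [MNp_pow_succ_apply subst p hL hlen, MNp_pow_succ_apply subst p hL hlen]
    refine Finset.sum_congr rfl fun s _ => congrArg _ (ih (m := L * m)
      (by rwa [← mul_assoc, ← pow_succ]) fun i hi => ?_)
    have hin : (i : ℕ) / L < n := (Nat.div_le_self _ _).trans_lt i.isLt
    simp only [trunc]
    rw [applySub_getD subst hL hlen s b i hin, applySub_getD subst hL hlen s b' i hin,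
      hbb' _ (Nat.div_lt_of_lt_mul hi)]

lemma MNp_mulVec_eq_self {n : ℕ} (v : (Fin n → A) → ℝ)
    (hv : ∀ a : Fin n → A, v a = ∑ s : Fin n → S, ∑ b : Fin n → A,
      if List.ofFn a <+: applySub subst s b then (∏ i : Fin n, p i.1 (s i)) * v b else 0) :
    MNp subst p n *ᵥ v = v := by
  funext a
  rw [hv a, Finset.sum_comm]
  simp only [Matrix.mulVec, dotProduct, MNp, Matrix.of_apply, Finset.sum_mul, ite_mul, zero_mul]

end Transition

lemma Matrix.pow_mulVec_eq_self {ι R : Type*} [Fintype ι] [DecidableEq ι] [CommSemiring R]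
    {M : Matrix ι ι R} {v : ι → R} (h : M *ᵥ v = v) (ℓ : ℕ) : (M ^ ℓ) *ᵥ v = v := by
  induction ℓ with
  | zero => simp
  | succ ℓ ih => rw [pow_succ, ← Matrix.mulVec_mulVec, h, ih]

section Cylinders

variable {A : Type*} [MeasurableSpace A] [MeasurableSingletonClass A]

lemma measurableSet_cyl {n : ℕ} (a : Fin n → A) : MeasurableSet (cyl A a) := by
  have : cyl A a = ⋂ i : Fin n, (fun x : ℕ → A => x i) ⁻¹' {a i} := by
    ext x; simp [cyl]
  rw [this]
  exact MeasurableSet.iInter fun i => measurable_pi_apply _ (measurableSet_singleton _)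

lemma sum_measure_cyl_fiber [Fintype A] [DecidableEq A] (κ : Measure (ℕ → A))
    [IsFiniteMeasure κ] {m n : ℕ} (hmn : m ≤ n) (b' : Fin m → A) :
    ∑ b : Fin n → A with b ∘ Fin.castLE hmn = b', (κ (cyl A b)).toReal =
      (κ (cyl A b')).toReal := by
  have hcyl : cyl A b' = ⋃ b ∈ Finset.univ.filter fun b : Fin n → A => b ∘ Fin.castLE hmn = b',
      cyl A b := by
    ext x
    simp only [Set.mem_iUnion, Finset.mem_filter, Finset.mem_univ, true_and, exists_prop]
    constructor
    · exact fun hx => ⟨fun i => x i, funext fun i => hx i, fun i => rfl⟩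
    · rintro ⟨b, rfl, hxb⟩ i
      exact hxb (Fin.castLE hmn i)
  have hdisj : Set.PairwiseDisjoint (↑(Finset.univ.filter fun b : Fin n → A =>
      b ∘ Fin.castLE hmn = b') : Set (Fin n → A)) (cyl A) := fun b _ c _ hbc =>
    Set.disjoint_left.2 fun x hb hc => hbc (funext fun i => (hb i).symm.trans (hc i))
  exact (measureReal_biUnion_finset hdisj fun b _ => measurableSet_cyl b).symm.trans
    (congrArg κ.real hcyl).symm

lemma MNp_pow_mulVec_eq_sum_prefix {S : Type*} [Fintype A] [DecidableEq A] [Inhabited A]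
    [Fintype S] {L : ℕ} (subst : S → A → List A) (p : ℕ → S → ℝ) (hL : 0 < L)
    (hlen : ∀ σ a, (subst σ a).length = L) (κ : Measure (ℕ → A)) [IsFiniteMeasure κ]
    {n m ℓ : ℕ} (hmn : m ≤ n) (hcover : n ≤ L ^ ℓ * m) (a : Fin n → A) :
    ((MNp subst p n ^ ℓ) *ᵥ fun b => (κ (cyl A b)).toReal) a =
      ∑ b' : Fin m → A, (MNp subst p n ^ ℓ) a (padWord n b') * (κ (cyl A b')).toReal := by
  rw [Matrix.mulVec, dotProduct, ← Finset.sum_fiberwise _ fun b : Fin n → A => b ∘ Fin.castLE hmn]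
  refine Finset.sum_congr rfl fun b' _ => ?_
  rw [← sum_measure_cyl_fiber κ hmn b', Finset.mul_sum]
  refine Finset.sum_congr rfl fun b hb => congrArg (· * _) ?_
  refine MNp_pow_apply_congr subst p hL hlen ℓ hcover a fun i hi => ?_
  rw [← (Finset.mem_filter.1 hb).2]
  simp [padWord, hi]

end Cylinders

lemma abs_log_div_le_iff {x y C : ℝ} (hx : 0 < x) (hy : 0 < y) :
    |log (x / y)| ≤ C ↔ exp (-C) * y ≤ x ∧ x ≤ exp C * y := by
  rw [abs_le, le_log_iff_exp_le (div_pos hx hy), log_le_iff_le_exp (div_pos hx hy),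
    le_div_iff₀ hy, div_le_iff₀ hy, mul_comm (exp C)]

lemma abs_log_sum_mul_div_sum_mul_le {ι : Type*} [Fintype ι] {W x y : ι → ℝ} {C : ℝ}
    (hW : ∀ i, 0 ≤ W i) (hx : ∀ i, 0 < x i) (hy : ∀ i, 0 < y i)
    (hWy : 0 < ∑ i, W i * y i) (hC : ∀ i, |log (x i / y i)| ≤ C) :
    |log ((∑ i, W i * x i) / ∑ i, W i * y i)| ≤ C := by
  have hxy i := (abs_log_div_le_iff (hx i) (hy i)).1 (hC i)
  have lower : exp (-C) * ∑ i, W i * y i ≤ ∑ i, W i * x i := by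
    rw [Finset.mul_sum]
    exact Finset.sum_le_sum fun i _ => by
      rw [mul_left_comm]; exact mul_le_mul_of_nonneg_left (hxy i).1 (hW i)
  have upper : ∑ i, W i * x i ≤ exp C * ∑ i, W i * y i := by
    rw [Finset.mul_sum]
    exact Finset.sum_le_sum fun i _ => by
      rw [mul_left_comm]; exact mul_le_mul_of_nonneg_left (hxy i).2 (hW i)
  exact (abs_log_div_le_iff ((mul_pos (exp_pos _) hWy).trans_le lower) hWy).2 ⟨lower, upper⟩

lemma natCeil_div_div_le {n k : ℝ} (hn : 0 < n) (hk : 0 < k) (h : ⌈n / k⌉₊ ≠ 1) :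
    ⌈n / k⌉₊ / n ≤ 2 / k := by
  have hkn : k < n := by
    by_contra! hnk
    have hle : ⌈n / k⌉₊ ≤ 1 := Nat.ceil_le.2 (by rw [Nat.cast_one, div_le_one hk]; exact hnk)
    have hpos : 0 < ⌈n / k⌉₊ := Nat.ceil_pos.2 (div_pos hn hk)
    omega
  have hceil : (⌈n / k⌉₊ : ℝ) * k < n + k := by
    have := Nat.ceil_lt_add_one (div_pos hn hk).le
    rwa [← lt_div_iff₀ hk, add_div, div_self hk.ne']
  rw [div_le_div_iff₀ hn hk]
  linarith

section CylinderWeights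

variable {A : Type*} [MeasurableSpace A]

lemma abs_log_div_le_mul_projDist {μ μ' : Measure (ℕ → A)} (hfin : projDist μ μ' ≠ ⊤)
    {m : ℕ} (hm : 0 < m) (b : Fin m → A) :
    |log ((μ (cyl A b)).toReal / (μ' (cyl A b)).toReal)| ≤ m * (projDist μ μ').toReal := by
  obtain ⟨M, rfl⟩ : ∃ M, m = M + 1 := ⟨m - 1, by omega⟩
  have hle : ENNReal.ofReal (|log ((μ (cyl A b)).toReal / (μ' (cyl A b)).toReal)| / (M + 1))
      ≤ projDist μ μ' :=
    le_iSup₂ (f := fun (N : ℕ) (a : Fin (N + 1) → A) => ENNReal.ofReal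
      (|log ((μ (cyl A a)).toReal / (μ' (cyl A a)).toReal)| / (N + 1))) M b
  rw [ENNReal.ofReal_le_iff_le_toReal hfin, div_le_iff₀ (by positivity)] at hle
  push_cast
  linarith

lemma toReal_measure_cyl_pos_of_prod {μ μν : Measure (ℕ → A)} [IsFiniteMeasure μν]
    (hprod : ∀ (N : ℕ) (a : Fin N → A),
      (μ (cyl A a)).toReal = ∏ i : Fin N, (μν {x | x i.1 = a i}).toReal)
    (hfs : ∀ (N : ℕ) (a : Fin N → A), 0 < μν (cyl A a)) {n : ℕ} (b : Fin n → A) :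
    0 < (μ (cyl A b)).toReal := by
  rw [hprod]
  refine Finset.prod_pos fun i _ => ENNReal.toReal_pos ?_ (measure_ne_top _ _)
  exact ((hfs n b).trans_le (measure_mono fun x hx => hx i)).ne'

lemma toReal_measure_cyl_eq_of_prod {μ μν : Measure (ℕ → A)}
    (hprod : ∀ (N : ℕ) (a : Fin N → A),
      (μ (cyl A a)).toReal = ∏ i : Fin N, (μν {x | x i.1 = a i}).toReal) (b : Fin 1 → A) :
    (μ (cyl A b)).toReal = (μν (cyl A b)).toReal := by
  rw [hprod, Fin.prod_univ_one]
  congr 2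
  ext x
  simp [cyl, Fin.forall_fin_one]

end CylinderWeights

section Iterate

variable {A S : Type*} [Fintype A] [DecidableEq A] [Inhabited A] [MeasurableSpace A]
  [MeasurableSingletonClass A] [Fintype S] {L : ℕ} {subst : S → A → List A} {p : ℕ → S → ℝ}
  {μ μν : Measure (ℕ → A)} [IsFiniteMeasure μ] [IsFiniteMeasure μν]

lemma abs_log_MNp_pow_mulVec_div_le (hL : 0 < L) (hlen : ∀ σ a, (subst σ a).length = L)
    (hp : ∀ k σ, 0 ≤ p k σ) {n m ℓ : ℕ} (hmn : m ≤ n) (hcover : n ≤ L ^ ℓ * m)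
    (hfix : MNp subst p n *ᵥ (fun b => (μν (cyl A b)).toReal) = fun b => (μν (cyl A b)).toReal)
    (hμ : ∀ b : Fin m → A, 0 < (μ (cyl A b)).toReal)
    (hμν : ∀ (k : ℕ) (b : Fin k → A), 0 < (μν (cyl A b)).toReal) (C : ℝ)
    (hC : ∀ b : Fin m → A, |log ((μ (cyl A b)).toReal / (μν (cyl A b)).toReal)| ≤ C)
    (a : Fin n → A) :
    |log (((MNp subst p n ^ ℓ) *ᵥ fun b => (μ (cyl A b)).toReal) a / (μν (cyl A a)).toReal)|
      ≤ C := by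
  have hfixℓ := congrFun (Matrix.pow_mulVec_eq_self hfix ℓ) a
  rw [← hfixℓ, MNp_pow_mulVec_eq_sum_prefix subst p hL hlen μ hmn hcover,
    MNp_pow_mulVec_eq_sum_prefix subst p hL hlen μν hmn hcover]
  refine abs_log_sum_mul_div_sum_mul_le (fun b => MNp_pow_nonneg subst p hp ℓ a _) hμ
    (hμν m) ?_ hC
  rw [← MNp_pow_mulVec_eq_sum_prefix subst p hL hlen μν hmn hcover, hfixℓ]
  exact hμν n a

lemma abs_log_MNp_pow_mulVec_div_le_two_div (hL : 1 < L)
    (hlen : ∀ σ a, (subst σ a).length = L) (hp : ∀ k σ, 0 ≤ p k σ)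
    (hfix : ∀ n, MNp subst p n *ᵥ (fun b => (μν (cyl A b)).toReal) =
      fun b => (μν (cyl A b)).toReal)
    (hμ : ∀ (n : ℕ) (b : Fin n → A), 0 < (μ (cyl A b)).toReal)
    (hμν : ∀ (n : ℕ) (b : Fin n → A), 0 < (μν (cyl A b)).toReal)
    (hone : ∀ b : Fin 1 → A, (μ (cyl A b)).toReal = (μν (cyl A b)).toReal)
    (hfin : projDist μ μν ≠ ⊤) (ℓ N : ℕ) (a : Fin (N + 1) → A) :
    |log (((MNp subst p (N + 1) ^ ℓ) *ᵥ fun b => (μ (cyl A b)).toReal) a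
        / (μν (cyl A a)).toReal)| / (N + 1) ≤ (projDist μ μν).toReal * (2 / L ^ ℓ) := by
  have hLℓ : (0 : ℝ) < L ^ ℓ := by positivity
  have hN : (0 : ℝ) < N + 1 := by positivity
  obtain ⟨m, hm⟩ : ∃ m, m = ⌈((N : ℝ) + 1) / L ^ ℓ⌉₊ := ⟨_, rfl⟩
  have hmn : m ≤ N + 1 := hm ▸ Nat.ceil_le.2 (by
    push_cast; exact div_le_self hN.le (one_le_pow₀ (by exact_mod_cast hL.le)))
  have hcover : N + 1 ≤ L ^ ℓ * m := by
    have := hm ▸ Nat.le_ceil (((N : ℝ) + 1) / L ^ ℓ)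
    rw [div_le_iff₀ hLℓ] at this
    exact_mod_cast this.trans_eq (mul_comm _ _)
  have hm0 : 0 < m := Nat.pos_of_ne_zero fun h => by simp [h] at hcover
  have hbound := abs_log_MNp_pow_mulVec_div_le (by omega) hlen hp hmn hcover (hfix _) (hμ m) hμν
  have hρ : 0 ≤ (projDist μ μν).toReal := ENNReal.toReal_nonneg
  by_cases hm1 : m = 1
  · subst hm1
    have := hbound 0 (fun b => by simp [hone b]) a
    calc _ ≤ 0 / ((N : ℝ) + 1) := by gcongr
      _ ≤ _ := by rw [zero_div]; positivity
  · calc _ ≤ m * (projDist μ μν).toReal / (N + 1) :=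
          by gcongr; exact hbound _ (abs_log_div_le_mul_projDist hfin hm0) a
      _ = (projDist μ μν).toReal * (m / (N + 1)) := by ring
      _ ≤ (projDist μ μν).toReal * (2 / L ^ ℓ) := by
          rw [hm] at hm1 ⊢
          exact mul_le_mul_of_nonneg_left (natCeil_div_div_le hN hLℓ hm1) hρ

end Iterate

lemma iterDist_le {A S : Type*} [Fintype A] [DecidableEq A] [Inhabited A] [MeasurableSpace A]
    [MeasurableSingletonClass A] [Fintype S] {L : ℕ} (hL : 1 < L) {subst : S → A → List A}
    (hlen : ∀ σ a, (subst σ a).length = L) {p : ℕ → S → ℝ} (hp : ∀ k σ, 0 ≤ p k σ)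
    {μ μν : Measure (ℕ → A)} [IsFiniteMeasure μ] [IsFiniteMeasure μν]
    (hfix : ∀ n, MNp subst p n *ᵥ (fun b => (μν (cyl A b)).toReal) =
      fun b => (μν (cyl A b)).toReal)
    (hμ : ∀ (n : ℕ) (b : Fin n → A), 0 < (μ (cyl A b)).toReal)
    (hμν : ∀ (n : ℕ) (b : Fin n → A), 0 < (μν (cyl A b)).toReal)
    (hone : ∀ b : Fin 1 → A, (μ (cyl A b)).toReal = (μν (cyl A b)).toReal)
    (hfin : projDist μ μν ≠ ⊤) (ℓ : ℕ) :
    iterDist subst p μ μν ℓ ≤ projDist μ μν * (((L : ℝ≥0∞) ^ ℓ)⁻¹ + ((L : ℝ≥0∞) ^ ℓ)⁻¹) := by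
  have hLℓ : (0 : ℝ) < L ^ ℓ := by positivity
  have htwo : ENNReal.ofReal (2 / L ^ ℓ) = ((L : ℝ≥0∞) ^ ℓ)⁻¹ + ((L : ℝ≥0∞) ^ ℓ)⁻¹ := by
    rw [← one_add_one_eq_two, add_div, one_div,
      ENNReal.ofReal_add (by positivity) (by positivity), ENNReal.ofReal_inv_of_pos hLℓ,
      ENNReal.ofReal_pow (Nat.cast_nonneg L), ENNReal.ofReal_natCast]
  refine iSup₂_le fun N a => ?_
  rw [← htwo, ← ENNReal.ofReal_toReal hfin, ← ENNReal.ofReal_mul ENNReal.toReal_nonneg]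
  exact ENNReal.ofReal_le_ofReal
    (abs_log_MNp_pow_mulVec_div_le_two_div hL hlen hp hfix hμ hμν hone hfin ℓ N a)

theorem stmt10_general {A S : Type*} [Fintype A] [DecidableEq A] [Inhabited A]
    [MeasurableSpace A] [MeasurableSingletonClass A] [Fintype S]
    (L : ℕ) (hL : 1 < L)
    (subst : S → A → List A) (hlen : ∀ σ a, (subst σ a).length = L)
    (p : ℕ → S → ℝ) (hp : ∀ n σ, 0 < p n σ)
    (μν : Measure (ℕ → A)) [IsProbabilityMeasure μν]
    (hfs : ∀ (N : ℕ) (a : Fin N → A), 0 < μν (cyl A a))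
    (hinv : ∀ (N : ℕ) (a : Fin N → A), (μν (cyl A a)).toReal =
      ∑ s : Fin N → S, ∑ b : Fin N → A,
        if List.ofFn a <+: applySub subst s b then
          (∏ i : Fin N, p i.1 (s i)) * (μν (cyl A b)).toReal else 0)
    (μ : Measure (ℕ → A)) [IsProbabilityMeasure μ]
    (hprod : ∀ (N : ℕ) (a : Fin N → A),
      (μ (cyl A a)).toReal = ∏ i : Fin N, (μν {x | x i.1 = a i}).toReal)
    (hfin : projDist μ μν ≠ ⊤) :
    Tendsto (iterDist subst p μ μν) atTop (nhds 0) ∧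
    ∃ Nf : ℕ → ℕ, Tendsto Nf atTop atTop ∧
      ∀ ℓ : ℕ, iterDist subst p μ μν ℓ ≤
        projDist μ μν * ((Nf ℓ : ℝ≥0∞)⁻¹ + ((L : ℝ≥0∞) ^ ℓ)⁻¹) := by
  have hμν (n : ℕ) (b : Fin n → A) : 0 < (μν (cyl A b)).toReal :=
    ENNReal.toReal_pos (hfs n b).ne' (measure_ne_top _ _)
  have hbound := iterDist_le hL hlen (fun k σ => (hp k σ).le)
    (fun n => MNp_mulVec_eq_self subst p _ (hinv n))
    (fun n => toReal_measure_cyl_pos_of_prod hprod hfs) hμν (toReal_measure_cyl_eq_of_prod hprod)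
    hfin
  have hinvpow : Tendsto (fun ℓ : ℕ => ((L : ℝ≥0∞) ^ ℓ)⁻¹) atTop (nhds 0) := by
    simpa only [ENNReal.inv_pow] using ENNReal.tendsto_pow_atTop_nhds_zero_of_lt_one
      (ENNReal.inv_lt_one.2 (by exact_mod_cast hL))
  refine ⟨?_, fun ℓ => L ^ ℓ, tendsto_pow_atTop_atTop_of_one_lt hL, fun ℓ => ?_⟩
  · refine tendsto_of_tendsto_of_tendsto_of_le_of_le tendsto_const_nhds ?_ (fun _ => zero_le)
      hbound
    simpa using ENNReal.Tendsto.const_mul (hinvpow.add hinvpow) (Or.inr hfin)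
  · push_cast
    exact hbound ℓ

/-- projective convergence: for a primitive constant-length substitution
of length L > 1 and a fully supported product measure ν on S^ℕ with invariant state μ_ν,
if the product measure μ with the same one-site marginals as μ_ν satisfies
ρ(μ,μ_ν) < ∞, then ρ(𝕊_ν^ℓ μ, μ_ν) → 0; more precisely
ρ(𝕊_ν^ℓ μ, μ_ν) ≤ ρ(μ,μ_ν)(1/N(ℓ) + 1/L^ℓ) for some N(ℓ) → ∞. -/
theorem stmt10 {A S : Type*} [Fintype A] [DecidableEq A] [Inhabited A] [Nonempty A]
    [MeasurableSpace A] [MeasurableSingletonClass A]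
    [Fintype S] [DecidableEq S] [Nonempty S]
    (L : ℕ) (hL : 1 < L)
    (subst : S → A → List A) (hlen : ∀ σ a, (subst σ a).length = L)
    (hprim : PrimitiveSub subst)
    (p : ℕ → S → ℝ) (hp : ∀ n σ, 0 < p n σ) (hp1 : ∀ n, ∑ σ : S, p n σ = 1)
    (μν : Measure (ℕ → A)) [IsProbabilityMeasure μν]
    (hfs : ∀ (N : ℕ) (a : Fin N → A), 0 < μν (cyl A a))
    (hinv : ∀ (N : ℕ) (a : Fin N → A), (μν (cyl A a)).toReal =
      ∑ s : Fin N → S, ∑ b : Fin N → A,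
        if List.ofFn a <+: applySub subst s b then
          (∏ i : Fin N, p i.1 (s i)) * (μν (cyl A b)).toReal else 0)
    (μ : Measure (ℕ → A)) [IsProbabilityMeasure μ]
    (hprod : ∀ (N : ℕ) (a : Fin N → A),
      (μ (cyl A a)).toReal = ∏ i : Fin N, (μν {x | x i.1 = a i}).toReal)
    (hfin : projDist μ μν ≠ ⊤) :
    Tendsto (iterDist subst p μ μν) atTop (nhds 0) ∧
    ∃ Nf : ℕ → ℕ, Tendsto Nf atTop atTop ∧
      ∀ ℓ : ℕ, iterDist subst p μ μν ℓ ≤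
        projDist μ μν * ((Nf ℓ : ℝ≥0∞)⁻¹ + ((L : ℝ≥0∞) ^ ℓ)⁻¹) :=
  stmt10_general L hL subst hlen p hp μν hfs hinv μ hprod hfin
end

section
/- Let S be a finite collection of substitutions on a finite alphabet A whose one-symbol transition matrix M_S (M_S(a,b) = 1 iff some word in S(a) := {σ(a) : σ ∈ S} starts with b) is primitive, and suppose there exists a sliding symbol a ∈ A, i.e., a^{p+1} ∈ S(a) for some p ≥ 1, every letter of A occurs as a first letter of some word in S(a), and S(A) ⊇ A^q for some q ≥ 1. Then S is primitive. -/
/-!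
The first letter of a configuration can be moved along paths in the graph of `M_S`, and
primitivity of `M_S` together with the loop `a → a` and the edges `a → b` of the sliding symbol
gives a path of every length `> k` between any two letters.

If `q = 1`, every letter is a one-letter image, so a prefix already built is carried along by
one-letter substitutions while the next letter is steered into place: the target is built letter
by letter, `k + 1` steps per letter. If `q ≥ 2`, cutting the target into blocks of length `q`
exhibits it as a prefix of the image of a word about `q` times shorter; iterating, the target is
reached from a configuration with a suitable first letter, which is steered into place first.
-/

section Words

variable {A S : Type*} (subst : S → A → List A)

def HeadPath : ℕ → A → A → Prop
  | 0, x, y => x = y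
  | m + 1, x, y => ∃ z, (∃ σ, (subst σ x).head? = some z) ∧ HeadPath m z y

def HasPrefix {N : ℕ} (v : Fin N → A) (w : List A) : Prop :=
  ∀ (i : ℕ) (hN : i < N) (hw : i < w.length), v ⟨i, hN⟩ = w[i]

def DerivesPrefix (u w : List A) : Prop :=
  ∃ ws : List (List A), List.Forall₂ (fun c b => ∃ σ, subst σ c = b) u ws ∧ w <+: ws.flatten

variable {subst}

theorem HeadPath.trans {m n : ℕ} {x y z : A} (hxy : HeadPath subst m x y)
    (hyz : HeadPath subst n y z) : HeadPath subst (m + n) x z := by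
  induction m generalizing x with
  | zero => cases hxy; simpa using hyz
  | succ m ih =>
    obtain ⟨w, hxw, hwy⟩ := hxy
    rw [Nat.add_right_comm]
    exact ⟨w, hxw, ih hwy⟩

theorem headPath_of_pow_pos [Fintype A] [DecidableEq A] [Fintype S] {MS : Matrix A A ℝ}
    (hMS : ∀ a b : A, MS a b = if ∃ σ, (subst σ a).head? = some b then 1 else 0) :
    ∀ {m : ℕ} {x y : A}, 0 < (MS ^ m) x y → HeadPath subst m x y
  | 0, x, y, h => by
    by_contra hxy
    simp [Matrix.one_apply_ne hxy] at h
  | m + 1, x, y, h => by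
    rw [pow_succ', Matrix.mul_apply] at h
    obtain ⟨z, -, hz⟩ :=
      Finset.exists_lt_of_sum_lt (s := Finset.univ) (f := fun _ => (0 : ℝ)) (by simpa using h)
    by_cases hxz : ∃ σ, (subst σ x).head? = some z
    · exact ⟨z, hxz, headPath_of_pow_pos hMS (by simpa [hMS, hxz] using hz)⟩
    · simp [hMS, hxz] at hz

theorem headPath_of_sliding {k : ℕ} {a : A} (hto : ∀ x, HeadPath subst k x a)
    (hloop : ∃ σ, (subst σ a).head? = some a) (hheads : ∀ y, ∃ σ, (subst σ a).head? = some y)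
    {m : ℕ} (hm : k < m) (x y : A) : HeadPath subst m x y := by
  have hcycle : ∀ j, HeadPath subst j a a := by
    intro j
    induction j with
    | zero => rfl
    | succ j ih => simpa [Nat.add_comm] using HeadPath.trans (m := 1) ⟨a, hloop, rfl⟩ ih
  obtain ⟨j, rfl⟩ := Nat.exists_eq_add_of_lt hm
  exact ((hto x).trans (hcycle j)).trans ⟨y, hheads y, rfl⟩

theorem hasPrefix_nil {N : ℕ} (v : Fin N → A) : HasPrefix v [] :=
  fun _ _ hw => absurd hw (Nat.not_lt_zero _)

theorem HasPrefix.append_singleton {N : ℕ} {v : Fin N → A} {u : List A} (h : HasPrefix v u)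
    (hu : u.length < N) : HasPrefix v (u ++ [v ⟨u.length, hu⟩]) := by
  intro i hN hw
  rcases Nat.lt_or_ge i u.length with hi | hi
  · rw [List.getElem_append_left hi]
    exact h i hN hi
  · obtain rfl : i = u.length := by simp at hw; omega
    simp

theorem HasPrefix.eq_of_ofFn {N : ℕ} {v a : Fin N → A} (h : HasPrefix v (List.ofFn a)) :
    v = a :=
  funext fun i => by simpa using h i i.2 (by simp)

theorem hasPrefix_trunc [Inhabited A] {N : ℕ} {w l : List A} (h : w <+: l) :
    HasPrefix (trunc N l) w := by
  intro i hN hw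
  rw [h.getElem hw]
  exact List.getD_eq_getElem _ _ _

theorem derivesPrefix_append_singleton {u w : List A} {x y : A}
    (huw : List.Forall₂ (fun c d => ∃ σ, subst σ c = [d]) u w)
    (hxy : ∃ σ, (subst σ x).head? = some y) : DerivesPrefix subst (u ++ [x]) (w ++ [y]) := by
  obtain ⟨σ, hσ⟩ := hxy
  obtain ⟨t, ht⟩ := List.head?_eq_some_iff.mp hσ
  refine ⟨w.map (fun d => [d]) ++ [subst σ x], List.rel_append ?_ (.cons ⟨σ, rfl⟩ .nil), ?_⟩
  · exact List.forall₂_map_right_iff.mpr huw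
  · simp [ht, ← List.flatMap_def]

theorem exists_short_derivesPrefix [Inhabited A] {q : ℕ} (hq0 : 0 < q)
    (hq : ∀ w : List A, w.length = q → ∃ σ c, subst σ c = w) (w : List A) :
    ∃ u, q * u.length < w.length + q ∧ DerivesPrefix subst u w := by
  induction hL : w.length using Nat.strong_induction_on generalizing w with
  | _ L ih =>
  by_cases hw : w = []
  · exact ⟨[], by simp [hq0], [], .nil, by simp [hw]⟩
  have hL0 : 0 < L := by rw [← hL]; exact List.length_pos_iff.mpr hw
  by_cases hLq : L ≤ q
  · obtain ⟨σ, c, hc⟩ := hq (w ++ List.replicate (q - L) default) (by simp; omega)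
    exact ⟨[c], by simp; omega, [_], .cons ⟨σ, hc⟩ .nil, by simp⟩
  · obtain ⟨σ, c, hc⟩ := hq (w.take q) (by simp; omega)
    obtain ⟨u, hu, ws, hF, hp⟩ := ih (L - q) (by omega) (w.drop q) (by simp; omega)
    refine ⟨c :: u, ?_, w.take q :: ws, .cons ⟨σ, hc⟩ hF, ?_⟩
    · simp only [List.length_cons, Nat.mul_succ]
      omega
    · simpa using (List.prefix_append_right_inj (w.take q)).mpr hp

end Words

section Steering

variable {A S : Type*} [Inhabited A] (subst : S → A → List A)

def Steers (N n : ℕ) (u w : List A) : Prop :=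
  ∀ v : Fin N → A, HasPrefix v u →
    ∃ ss : List (Fin N → S), ss.length = n ∧ HasPrefix (chainT subst ss v) w

variable {subst}

theorem chainT_append {N : ℕ} (ss ts : List (Fin N → S)) (v : Fin N → A) :
    chainT subst (ss ++ ts) v = chainT subst ts (chainT subst ss v) := by
  induction ss generalizing v with
  | nil => rfl
  | cons s ss ih => exact ih _

theorem Steers.refl (N : ℕ) (u : List A) : Steers subst N 0 u u :=
  fun _ hv => ⟨[], rfl, hv⟩

theorem Steers.trans {N m n : ℕ} {u w x : List A} (huw : Steers subst N m u w)
    (hwx : Steers subst N n w x) : Steers subst N (m + n) u x := by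
  intro v hv
  obtain ⟨ss, hss, hw⟩ := huw v hv
  obtain ⟨ts, hts, hx⟩ := hwx _ hw
  exact ⟨ss ++ ts, by simp [hss, hts], by rwa [chainT_append]⟩

theorem steers_nil_right [Nonempty S] (N n : ℕ) (u : List A) : Steers subst N n u [] :=
  fun _ _ =>
    ⟨List.replicate n fun _ => Classical.arbitrary S, List.length_replicate, hasPrefix_nil _⟩

theorem Steers.nil_of_le {N m n : ℕ} [Nonempty S] {w : List A} (h : Steers subst N m [] w)
    (hmn : m ≤ n) : Steers subst N n [] w := by
  simpa [Nat.sub_add_cancel hmn] using (steers_nil_right N (n - m) []).trans h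

theorem Steers.of_forall_append_singleton {N n : ℕ} {u w : List A} (hu : u.length < N)
    (h : ∀ x, Steers subst N n (u ++ [x]) w) : Steers subst N n u w :=
  fun v hv => h _ v (hv.append_singleton hu)

theorem steers_one_of_derivesPrefix [Nonempty S] {N : ℕ} {u w : List A} (hu : u.length ≤ N)
    (h : DerivesPrefix subst u w) : Steers subst N 1 u w := by
  classical
  intro v hv
  obtain ⟨ws, hF, hw⟩ := h
  obtain ⟨hlen, hrel⟩ := List.forall₂_iff_get.mp hF
  choose σ hσ using fun i (hi : i < u.length) => hrel i hi (hlen ▸ hi)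
  let s : Fin N → S := fun i => if hi : i.1 < u.length then σ i hi else Classical.arbitrary S
  have hblocks : (List.ofFn fun i => subst (s i) (v i)).take u.length = ws := by
    apply List.ext_getElem (by simp; omega)
    intro i hi _
    have hiu : i < u.length := by simp at hi; omega
    simpa [s, hiu, hv i (by omega) hiu] using hσ i hiu
  refine ⟨[s], rfl, hasPrefix_trunc (hw.trans ?_)⟩
  rw [← hblocks]
  exact (List.take_prefix _ _).flatten

theorem Steers.of_headPath [Nonempty S] {N : ℕ} (hN : 0 < N) :
    ∀ {m : ℕ} {x y : A}, HeadPath subst m x y → Steers subst N m [x] [y]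
  | 0, _, _, rfl => Steers.refl N _
  | m + 1, x, y, ⟨z, hxz, hzy⟩ => by
    have hstep : Steers subst N 1 [x] [z] :=
      steers_one_of_derivesPrefix hN (by simpa using derivesPrefix_append_singleton .nil hxz)
    simpa [Nat.add_comm] using hstep.trans (Steers.of_headPath hN hzy)

theorem primitiveSub_of_steers
    (h : ∀ N, ∃ n₀, ∀ n ≥ n₀, ∀ w : List A, w.length = N → Steers subst N n [] w) :
    PrimitiveSub subst := by
  intro N
  obtain ⟨n₀, hn₀⟩ := h N
  refine ⟨n₀, fun n hn a b => ?_⟩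
  obtain ⟨ss, hss, hb⟩ := hn₀ n hn (List.ofFn a) (by simp) b (hasPrefix_nil b)
  exact ⟨ss, hss, hb.eq_of_ofFn⟩

end Steering

section Construction

variable {A S : Type*} [Inhabited A] [Nonempty S] {subst : S → A → List A} {N : ℕ}

theorem exists_steers_append_singleton (hsingle : ∀ d, ∃ c σ, subst σ c = [d]) (m : ℕ)
    {w : List A} (hw : w.length < N) :
    ∃ u : List A, u.length = w.length ∧
      ∀ x y, HeadPath subst m x y → Steers subst N m (u ++ [x]) (w ++ [y]) := by
  induction m generalizing w with
  | zero => exact ⟨w, rfl, fun x y (hxy : x = y) => hxy ▸ Steers.refl N _⟩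
  | succ m ih =>
    obtain ⟨u₀, hu₀, hsteer⟩ := ih hw
    choose g σ hσ using hsingle
    refine ⟨u₀.map g, by simp [hu₀], fun x y ⟨z, hxz, hzy⟩ => ?_⟩
    have hrel : List.Forall₂ (fun c d => ∃ σ, subst σ c = [d]) (u₀.map g) u₀ :=
      List.forall₂_map_left_iff.mpr (List.forall₂_same.mpr fun d _ => ⟨σ d, hσ d⟩)
    have hstep : Steers subst N 1 (u₀.map g ++ [x]) (u₀ ++ [z]) :=
      steers_one_of_derivesPrefix (by simp; omega) (derivesPrefix_append_singleton hrel hxz)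
    simpa [Nat.add_comm] using hstep.trans (hsteer z y hzy)

theorem steers_nil_of_singletons (hsingle : ∀ d, ∃ c σ, subst σ c = [d]) {m : ℕ}
    (hpath : ∀ x y, HeadPath subst m x y) (w : List A) (hw : w.length ≤ N) :
    Steers subst N (w.length * m) [] w := by
  induction hL : w.length generalizing w with
  | zero => simpa [List.length_eq_zero_iff.mp hL] using Steers.refl N []
  | succ ℓ ih =>
    obtain ⟨w, d, rfl⟩ : ∃ w' d, w = w' ++ [d] :=
      ⟨_, _, (List.dropLast_append_getLast (List.ne_nil_of_length_eq_add_one hL)).symm⟩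
    have hwN : w.length < N := by simp at hw; omega
    obtain ⟨u, hu, hsteer⟩ := exists_steers_append_singleton hsingle m hwN
    have hlast : Steers subst N m u (w ++ [d]) :=
      Steers.of_forall_append_singleton (hu ▸ hwN) fun x => hsteer x d (hpath x d)
    have hprefix : Steers subst N (ℓ * m) [] u := ih u (by omega) (by simp at hL; omega)
    simpa [Nat.succ_mul] using hprefix.trans hlast

variable {q : ℕ} (hq : ∀ w : List A, w.length = q → ∃ σ c, subst σ c = w)
include hq

theorem exists_steers_singleton (hq0 : 0 < q) (hN : 0 < N) (d : A) :
    ∀ T, ∃ z, Steers subst N T [z] [d]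
  | 0 => ⟨d, Steers.refl N _⟩
  | T + 1 => by
    obtain ⟨z, hz⟩ := exists_steers_singleton hq0 hN d T
    obtain ⟨σ, c, hc⟩ := hq (z :: List.replicate (q - 1) z) (by simp; omega)
    have hstep : Steers subst N 1 [c] [z] :=
      steers_one_of_derivesPrefix hN ⟨[_], .cons ⟨σ, hc⟩ .nil, by simp⟩
    exact ⟨c, by simpa [Nat.add_comm] using hstep.trans hz⟩

theorem exists_steers_of_length_le (hq2 : 2 ≤ q) (w : List A) (hw : w.length ≤ N) (T : ℕ)
    (hT : w.length ≤ T) : ∃ z, Steers subst N T [z] w := by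
  induction hL : w.length using Nat.strong_induction_on generalizing w T with
  | _ L ih =>
  rcases Nat.lt_or_ge L 2 with hL2 | hL2
  · interval_cases L
    · rw [List.length_eq_zero_iff.mp hL]
      exact ⟨default, steers_nil_right N T _⟩
    · obtain ⟨d, rfl⟩ := List.length_eq_one_iff.mp hL
      exact exists_steers_singleton hq (by omega) (by simp at hw; omega) d T
  obtain ⟨u, hu, hder⟩ := exists_short_derivesPrefix (by omega) hq w
  have huL : u.length < L := by rw [hL] at hu; nlinarith
  obtain ⟨z, hz⟩ := ih u.length (by omega) u (by omega) (T - 1) (by omega) rfl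
  have hstep : Steers subst N 1 u w := steers_one_of_derivesPrefix (by omega) hder
  exact ⟨z, by simpa [Nat.sub_add_cancel (by omega : 1 ≤ T)] using hz.trans hstep⟩

theorem steers_nil_of_blocks (hq2 : 2 ≤ q) {k : ℕ}
    (hpath : ∀ {m}, k < m → ∀ x y : A, HeadPath subst m x y) (w : List A) (hw : w.length ≤ N)
    {n : ℕ} (hn : w.length + k < n) : Steers subst N n [] w := by
  rcases Nat.eq_zero_or_pos w.length with hw0 | hwpos
  · simpa [List.length_eq_zero_iff.mp hw0] using steers_nil_right N n []
  have hN : 0 < N := by omega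
  obtain ⟨z, hz⟩ := exists_steers_of_length_le hq hq2 w hw w.length le_rfl
  have hfirst : Steers subst N (n - w.length) [] [z] :=
    Steers.of_forall_append_singleton hN fun x => Steers.of_headPath hN (hpath (by omega) x z)
  simpa [Nat.sub_add_cancel (by omega : w.length ≤ n)] using hfirst.trans hz

end Construction

theorem stmt18_general {A S : Type*} [Fintype A] [DecidableEq A] [Inhabited A]
    [Fintype S]
    (subst : S → A → List A)
    (MS : Matrix A A ℝ)
    (hMS : ∀ a b : A, MS a b = if ∃ σ, (subst σ a).head? = some b then 1 else 0)
    (hMSprim : ∃ k : ℕ, ∀ a b : A, 0 < (MS ^ k) a b)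
    (hslide : ∃ (a : A) (p : ℕ), 1 ≤ p ∧
      (∃ σ, subst σ a = List.replicate (p + 1) a) ∧
      (∀ b : A, ∃ σ, (subst σ a).head? = some b) ∧
      (∃ q : ℕ, 1 ≤ q ∧ ∀ w : List A, w.length = q → ∃ σ c, subst σ c = w)) :
    PrimitiveSub subst := by
  obtain ⟨k, hk⟩ := hMSprim
  obtain ⟨a, p, -, ⟨σ, hσ⟩, hheads, q, hq1, hq⟩ := hslide
  have : Nonempty S := ⟨σ⟩
  have hpath : ∀ {m}, k < m → ∀ x y : A, HeadPath subst m x y :=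
    headPath_of_sliding (fun x => headPath_of_pow_pos hMS (hk x a))
      ⟨σ, by simp [hσ, List.replicate_succ]⟩ hheads
  apply primitiveSub_of_steers
  intro N
  rcases Nat.lt_or_ge q 2 with hq2 | hq2
  · obtain rfl : q = 1 := by omega
    have hsingle : ∀ d, ∃ c σ, subst σ c = [d] := fun d => by
      obtain ⟨σ, c, hc⟩ := hq [d] rfl
      exact ⟨c, σ, hc⟩
    refine ⟨N * (k + 1), fun n hn w hw => ?_⟩
    exact (steers_nil_of_singletons hsingle (hpath k.lt_succ_self) w hw.le).nil_of_le (hw ▸ hn)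
  · exact ⟨N + k + 1, fun n hn w hw =>
      steers_nil_of_blocks hq hq2 hpath w hw.le (by omega)⟩

/-- if the one-symbol transition matrix M_S (M_S(a,b) = 1 iff some word of
S(a) starts with b) of a finite collection of substitutions is primitive, and there is a
sliding symbol a (i.e. a^{p+1} ∈ S(a) for some p ≥ 1, every letter occurs as first letter
of some word in S(a), and S(A) contains every word of some length q ≥ 1), then S is
primitive. -/
theorem stmt18 {A S : Type*} [Fintype A] [DecidableEq A] [Inhabited A]
    [Fintype S] [Nonempty S]
    (subst : S → A → List A) (hne : ∀ σ a, subst σ a ≠ [])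
    (MS : Matrix A A ℝ)
    (hMS : ∀ a b : A, MS a b = if ∃ σ, (subst σ a).head? = some b then 1 else 0)
    (hMSprim : ∃ k : ℕ, ∀ a b : A, 0 < (MS ^ k) a b)
    (hslide : ∃ (a : A) (p : ℕ), 1 ≤ p ∧
      (∃ σ, subst σ a = List.replicate (p + 1) a) ∧
      (∀ b : A, ∃ σ, (subst σ a).head? = some b) ∧
      (∃ q : ℕ, 1 ≤ q ∧ ∀ w : List A, w.length = q → ∃ σ c, subst σ c = w)) :
    PrimitiveSub subst :=
  stmt18_general subst MS hMS hMSprim hslide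
end
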